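/- Let (X, ≤) be a well-quasi-ordered set under the subword (subsequence) ordering on words over a finite alphabet M. Any subset of M* closed under taking subwords is a regular language. -/

import Mathlib

/-!
The complement of a subword-closed language is upward closed for the subword order, and by
Higman's lemma its minimal elements are finitely many words `b`. Hence the language is the
complement of a finite union of the languages `superwords b = M* b₁ M* ⋯ M* bₖ M*`, each of
which is regular by Myhill–Nerode: reading a word greedily consumes a prefix of `b`, so every left
quotient of `superwords b` is `superwords s` for a suffix `s` of `b`.
-/

open List

theorem List.wellQuasiOrdered_sublist {α : Type*} [Finite α] :
    WellQuasiOrdered (fun l₁ l₂ : List α => l₁ <+ l₂) := by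
  have higman := Set.PartiallyWellOrderedOn.partiallyWellOrderedOn_sublistForall₂ Eq
    (Set.finite_univ (α := α)).partiallyWellOrderedOn
  have sublistForall₂_eq : SublistForall₂ (α := α) Eq = Sublist := by
    ext l₁ l₂
    rw [sublistForall₂_iff, forall₂_eq_eq_eq]
    exact ⟨fun ⟨_, rfl, h⟩ => h, fun h => ⟨l₁, rfl, h⟩⟩
  simpa [sublistForall₂_eq, Set.partiallyWellOrderedOn_univ_iff] using higman

theorem List.exists_finite_sublist_basis {α : Type*} [Finite α] (T : Set (List α)) :
    ∃ B ⊆ T, B.Finite ∧ ∀ w ∈ T, ∃ b ∈ B, b <+ w := by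
  set B := {b ∈ T | ∀ u ∈ T, u <+ b → u = b}
  have hB : IsAntichain (· <+ ·) B := fun _ ha _ hb hne hsub => hne (hb.2 _ ha.1 hsub)
  refine ⟨B, fun _ hb => hb.1, hB.finite_of_wellQuasiOrdered wellQuasiOrdered_sublist, ?_⟩
  intro w hw
  -- a shortest word of `T` below `w` is minimal in `T`
  obtain ⟨b, ⟨hbT, hbw⟩, hmin⟩ :=
    (measure List.length).wf.has_min {u | u ∈ T ∧ u <+ w} ⟨w, hw, .refl w⟩
  refine ⟨b, ⟨hbT, fun u huT hub => hub.eq_of_length_le ?_⟩, hbw⟩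
  exact not_lt.1 (hmin u ⟨huT, hub.trans hbw⟩)

namespace Language

variable {α : Type*}

theorem isRegular_zero : (0 : Language α).IsRegular :=
  ⟨Unit, inferInstance, ⟨fun _ _ => (), (), ∅⟩, by
    ext; simp [DFA.accepts, DFA.acceptsFrom, zero_def]⟩

theorem isRegular_biSup {ι : Type*} {s : Set ι} (hs : s.Finite) {L : ι → Language α}
    (hL : ∀ i ∈ s, (L i).IsRegular) : (⨆ i ∈ s, L i).IsRegular := by
  induction s, hs using Set.Finite.induction_on with
  | empty =>
    rw [iSup_emptyset]
    exact isRegular_zero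
  | insert _ _ ih =>
    rw [iSup_insert]
    exact (hL _ (Set.mem_insert _ _)).add (ih fun i hi => hL i (Set.mem_insert_of_mem _ hi))

def superwords (b : List α) : Language α := {w | b <+ w}

theorem mem_superwords {b w : List α} : w ∈ superwords b ↔ b <+ w := Iff.rfl

theorem exists_suffix_leftQuotient_singleton_superwords (b : List α) (a : α) :
    ∃ s, s <:+ b ∧ (superwords b).leftQuotient [a] = superwords s := by
  match b with
  | [] => exact ⟨[], suffix_refl _, by ext; simp [mem_leftQuotient, mem_superwords]⟩
  | c :: b =>
    by_cases hca : c = a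
    · refine ⟨b, suffix_cons _ _, ?_⟩
      ext y
      simp [mem_leftQuotient, mem_superwords, hca]
    · refine ⟨c :: b, suffix_refl _, ?_⟩
      ext y
      simp [mem_leftQuotient, mem_superwords, sublist_cons_iff, hca]

theorem exists_suffix_leftQuotient_superwords (b x : List α) :
    ∃ s, s <:+ b ∧ (superwords b).leftQuotient x = superwords s := by
  induction x generalizing b with
  | nil => exact ⟨b, suffix_refl b, leftQuotient_nil _⟩
  | cons a x ih =>
    obtain ⟨s, hsb, hs⟩ := exists_suffix_leftQuotient_singleton_superwords b a
    obtain ⟨t, hts, ht⟩ := ih s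
    refine ⟨t, hts.trans hsb, ?_⟩
    rw [← singleton_append, leftQuotient_append, hs, ht]

theorem isRegular_superwords (b : List α) : (superwords b).IsRegular := by
  refine IsRegular.of_finite_range_leftQuotient <|
    (b.tails.finite_toSet.image superwords).subset ?_
  rintro _ ⟨x, rfl⟩
  obtain ⟨s, hsb, hs⟩ := exists_suffix_leftQuotient_superwords b x
  exact ⟨s, (mem_tails s b).2 hsb, hs.symm⟩

end Language

open Language

/-- Over a finite alphabet `M`, any set of words closed under taking subwords
(scattered subsequences, `List.Sublist`) is a regular language.
(The closure under subwords makes the complement of `S` upward closed for the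
subword well-quasi-order given by Higman's lemma, whence regularity.) -/
theorem subword_closed_isRegular {M : Type} [Fintype M] (S : Language M)
    (hS : ∀ w ∈ S, ∀ u : List M, u.Sublist w → u ∈ S) :
    S.IsRegular := by
  obtain ⟨B, hBS, hBfin, hbasis⟩ := exists_finite_sublist_basis (S : Set (List M))ᶜ
  suffices S = (⨆ b ∈ B, superwords b)ᶜ from
    this ▸ (isRegular_biSup hBfin fun b _ => isRegular_superwords b).compl
  ext w
  change w ∈ S ↔ w ∉ ⨆ b ∈ B, superwords b
  simp only [mem_iSup, mem_superwords, not_exists]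
  refine ⟨fun hw b hb hbw => hBS hb (hS w hw b hbw), fun h => ?_⟩
  by_contra hw
  obtain ⟨b, hb, hbw⟩ := hbasis w hw
  exact h b hb hbw
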